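/- (Normal forms for the central factor.) Every C ∈ GL₂(ℂ) is gauge equivalent over O(ℂ*) to a matrix C₀ of one of the three forms: diag(ξ, ξ) (trivial form); diag(ξ₁, ξ₂) with ξ₁ ≠ ξ₂ (generic form); or [[ξ, ξ], [0, ξ]] (logarithmic form), with ξ, ξ₁, ξ₂ in the fundamental annulus C_q := {z ∈ ℂ : |q| < |z| ≤ 1}; that is, there exists Λ ∈ GL₂(O(ℂ*)) with Λ(qx) C = C₀ Λ(x) for all x ≠ 0. Moreover the normal form is unique except for the permutation of the diagonal entries in the generic form: if C₀ and C₀′ are both of one of these three forms (with spectra in C_q) and there exists Λ ∈ GL₂(O(ℂ*)) with Λ(qx) C₀ = C₀′ Λ(x) for all x ≠ 0, then C₀′ = C₀, or C₀ = diag(ξ₁, ξ₂) and C₀′ = diag(ξ₂, ξ₁) for some ξ₁ ≠ ξ₂. -/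

import Mathlib

/-! Constant gauge transformations are similarities, and `diag(x ^ m, x ^ n)` multiplies the
eigenvalues by `q ^ m` and `q ^ n`; so the Jordan form of `C`, with its eigenvalues moved into
`C_q`, is a normal form.

For uniqueness, a gauge transformation `Λ` between two upper triangular matrices with diagonal in
`C_q` is constant: entry by entry, `Λ` solves scalar equations `f (q x) = c f(x) + k` with
`|q| < |c| < |q|⁻¹`. Their holomorphic solutions on `ℂ*` are constant: the equation forces
`x f(x) → 0` at `0`, so `f` extends to an entire function, and comparing Taylor coefficients of
`f (q x) = c f(x)` at `0` leaves only the constant term; the case `c = 1`, `k ≠ 0` is excluded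
by applying this to `exp (π i f / k)`. Hence the two normal forms are similar, and trace and
determinant finish the comparison. -/

open Matrix

/-- Entrywise holomorphy on `ℂ ∖ {0}` of a matrix-valued function. -/
def MatHolo (M : ℂ → Matrix (Fin 2) (Fin 2) ℂ) : Prop :=
  ∀ i j : Fin 2, ∀ x : ℂ, x ≠ 0 → DifferentiableAt ℂ (fun y => M y i j) x

/-- `GL₂(O(ℂ*))`: matrices holomorphic on `ℂ*` and invertible at every `x ≠ 0`. -/
def GLO (Λ : ℂ → Matrix (Fin 2) (Fin 2) ℂ) : Prop :=
  MatHolo Λ ∧ ∀ x : ℂ, x ≠ 0 → IsUnit (Λ x).det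

/-- Membership in the fundamental annulus `C_q = {z : |q| < |z| ≤ 1}`. -/
def InAnn (q z : ℂ) : Prop := ‖q‖ < ‖z‖ ∧ ‖z‖ ≤ 1

/-- The three normal forms (trivial, generic, logarithmic) with spectrum in `C_q`. -/
def NormalForm (q : ℂ) (C : Matrix (Fin 2) (Fin 2) ℂ) : Prop :=
  (∃ ξ : ℂ, InAnn q ξ ∧ C = Matrix.diagonal ![ξ, ξ]) ∨
  (∃ ξ1 ξ2 : ℂ, InAnn q ξ1 ∧ InAnn q ξ2 ∧ ξ1 ≠ ξ2 ∧ C = Matrix.diagonal ![ξ1, ξ2]) ∨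
  (∃ ξ : ℂ, InAnn q ξ ∧ C = !![ξ, ξ; 0, ξ])

/-- Gauge equivalence over `O(ℂ*)`: `Λ(qx) C = C' Λ(x)` for some `Λ ∈ GL₂(O(ℂ*))`. -/
def GaugeEq (q : ℂ) (C C' : Matrix (Fin 2) (Fin 2) ℂ) : Prop :=
  ∃ Λ : ℂ → Matrix (Fin 2) (Fin 2) ℂ, GLO Λ ∧
    ∀ x : ℂ, x ≠ 0 → Λ (q * x) * C = C' * Λ x

open Filter Asymptotics Topology

section QDifference

variable {q c : ℂ} {f : ℂ → ℂ}

lemma qdiff_pow_mul (hq : q ≠ 0) (heq : ∀ x, x ≠ 0 → f (q * x) = c * f x) (n : ℕ) {x : ℂ}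
    (hx : x ≠ 0) : f (q ^ n * x) = c ^ n * f x := by
  induction n with
  | zero => simp
  | succ n ih =>
    rw [pow_succ', mul_assoc, heq _ (mul_ne_zero (pow_ne_zero n hq) hx), ih, pow_succ',
      mul_assoc]

lemma exists_bound_on_closedAnnulus (hq : q ≠ 0)
    (hf : ∀ x, x ≠ 0 → DifferentiableAt ℂ f x) :
    ∃ M, ∀ y : ℂ, ‖q‖ ≤ ‖y‖ → ‖y‖ ≤ 1 → ‖f y‖ ≤ M := by
  have hK : IsCompact (Metric.closedBall (0 : ℂ) 1 \ Metric.ball 0 ‖q‖) :=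
    (isCompact_closedBall 0 1).diff Metric.isOpen_ball
  obtain ⟨M, hM⟩ := hK.exists_bound_of_continuousOn fun y hy =>
    (hf y (by rintro rfl; simp_all)).continuousAt.continuousWithinAt
  exact ⟨M, fun y h₁ h₂ => hM y (by simp [h₁, h₂])⟩

lemma exists_norm_mul_le_of_qdiff (hq0 : 0 < ‖q‖) (hq1 : ‖q‖ < 1)
    (hf : ∀ x, x ≠ 0 → DifferentiableAt ℂ f x) (heq : ∀ x, x ≠ 0 → f (q * x) = c * f x)
    (hc : ‖c‖ * ‖q‖ < 1) :
    ∃ M, ∀ n : ℕ, ∀ x : ℂ, x ≠ 0 → ‖x‖ ≤ ‖q‖ ^ n → ‖x * f x‖ ≤ M * (‖c‖ * ‖q‖) ^ n := by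
  have hq : q ≠ 0 := norm_pos_iff.mp hq0
  obtain ⟨M, hM⟩ := exists_bound_on_closedAnnulus hq hf
  have hM0 : 0 ≤ M := (norm_nonneg _).trans (hM 1 (by simpa using hq1.le) (by simp))
  refine ⟨M, fun n x hx hxn => ?_⟩
  obtain ⟨m, hm_lt, hm_le⟩ := exists_nat_pow_near_of_lt_one (norm_pos_iff.mpr hx)
    (hxn.trans (pow_le_one₀ hq0.le hq1.le)) hq0 hq1
  have hnm : n ≤ m := Nat.lt_succ_iff.mp <|
    (pow_lt_pow_iff_right_of_lt_one₀ hq0 hq1).mp (hm_lt.trans_le hxn)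
  set y := x / q ^ m
  have hqm : ‖q‖ ^ m ≠ 0 := by positivity
  have hxy : x = q ^ m * y := (mul_div_cancel₀ x (pow_ne_zero m hq)).symm
  have hy : ‖y‖ = ‖x‖ / ‖q‖ ^ m := by simp [y]
  have hy0 : y ≠ 0 := by simp [y, hx, hq]
  have hy1 : ‖y‖ ≤ 1 := by rw [hy, div_le_one (by positivity)]; exact hm_le
  have hyq : ‖q‖ ≤ ‖y‖ := by
    rw [hy, le_div_iff₀ (by positivity), ← pow_succ']; exact hm_lt.le
  calc ‖x * f x‖ = (‖c‖ * ‖q‖) ^ m * (‖y‖ * ‖f y‖) := by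
        rw [hxy, qdiff_pow_mul hq heq m hy0]; simp only [norm_mul, norm_pow]; ring
    _ ≤ (‖c‖ * ‖q‖) ^ n * (1 * M) :=
        mul_le_mul (pow_le_pow_of_le_one (by positivity) hc.le hnm)
          (mul_le_mul hy1 (hM y hyq hy1) (norm_nonneg _) zero_le_one) (by positivity)
          (by positivity)
    _ = M * (‖c‖ * ‖q‖) ^ n := by ring

lemma isLittleO_inv_of_qdiff (hq0 : 0 < ‖q‖) (hq1 : ‖q‖ < 1)
    (hf : ∀ x, x ≠ 0 → DifferentiableAt ℂ f x) (heq : ∀ x, x ≠ 0 → f (q * x) = c * f x)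
    (hc : ‖c‖ * ‖q‖ < 1) :
    f =o[𝓝[≠] 0] fun x => x⁻¹ := by
  obtain ⟨M, hM⟩ := exists_norm_mul_le_of_qdiff hq0 hq1 hf heq hc
  refine isLittleO_iff.mpr fun ε hε => ?_
  obtain ⟨n, hn⟩ := (((tendsto_pow_atTop_nhds_zero_of_lt_one (by positivity) hc).const_mul
    M).eventually (gt_mem_nhds (by simpa using hε))).exists
  have hball : Metric.closedBall (0 : ℂ) (‖q‖ ^ n) ∈ 𝓝[≠] (0 : ℂ) :=
    nhdsWithin_le_nhds (Metric.closedBall_mem_nhds 0 (by positivity))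
  filter_upwards [hball, self_mem_nhdsWithin] with x hxn (hx : x ≠ 0)
  have hxpos : 0 < ‖x‖ := norm_pos_iff.mpr hx
  rw [norm_inv, ← div_eq_mul_inv, le_div_iff₀ hxpos, mul_comm, ← norm_mul]
  exact (hM n x hx (by simpa using hxn)).trans hn.le

lemma exists_differentiable_eq_of_qdiff (hq0 : 0 < ‖q‖) (hq1 : ‖q‖ < 1)
    (hf : ∀ x, x ≠ 0 → DifferentiableAt ℂ f x) (heq : ∀ x, x ≠ 0 → f (q * x) = c * f x)
    (hc : ‖c‖ * ‖q‖ < 1) :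
    ∃ F : ℂ → ℂ, Differentiable ℂ F ∧ ∀ x, x ≠ 0 → F x = f x := by
  have ho : (fun z => f z - f 0) =o[𝓝[≠] 0] fun z => (z - 0)⁻¹ := by
    have hconst : (fun _ => f 0) =o[𝓝[≠] (0 : ℂ)] fun z => (z - 0)⁻¹ :=
      isBoundedUnder_const.isLittleO_sub_self_inv
    simpa using (isLittleO_inv_of_qdiff hq0 hq1 hf heq hc).sub (by simpa using hconst)
  have hF := Complex.differentiableOn_update_limUnder_of_isLittleO univ_mem
    (fun z hz => (hf z hz.2).differentiableWithinAt) ho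
  exact ⟨_, fun z => (hF z trivial).differentiableAt univ_mem,
    fun x hx => Function.update_of_ne hx _ _⟩

theorem exists_const_of_qdiff (hq0 : 0 < ‖q‖) (hq1 : ‖q‖ < 1)
    (hf : ∀ x, x ≠ 0 → DifferentiableAt ℂ f x) (heq : ∀ x, x ≠ 0 → f (q * x) = c * f x)
    (hc₁ : ‖q‖ < ‖c‖) (hc₂ : ‖c‖ * ‖q‖ < 1) :
    ∃ a, ∀ x, x ≠ 0 → f x = a := by
  obtain ⟨F, hF, hFf⟩ := exists_differentiable_eq_of_qdiff hq0 hq1 hf heq hc₂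
  have hFeq : (fun x => F (q * x)) = fun x => c * F x :=
    (hF.comp (differentiable_id.const_mul q)).continuous.ext_on (dense_compl_singleton 0)
      (hF.continuous.const_mul c) fun x (hx : x ≠ 0) => by
        simp only [Function.comp_apply, hFf x hx, hFf _ (mul_ne_zero (norm_pos_iff.mp hq0) hx),
          heq x hx]
  -- Differentiating `F (q x) = c F x` at `0` gives `q ^ n F⁽ⁿ⁾(0) = c F⁽ⁿ⁾(0)`, and `q ^ n ≠ c`.
  have hderiv : ∀ n, n ≠ 0 → iteratedDeriv n F 0 = 0 := fun n hn => by
    have h := congrFun (iteratedDeriv_comp_const_mul (hF.contDiff (n := n)) q) 0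
    rw [hFeq, iteratedDeriv_const_mul_field, mul_zero] at h
    have hqn : ‖q ^ n‖ < ‖c‖ := by
      rw [norm_pow]; exact (pow_le_of_le_one hq0.le hq1.le hn).trans_lt hc₁
    have hcq : c - q ^ n ≠ 0 := sub_ne_zero.mpr (ne_of_apply_ne norm hqn.ne')
    have hmul : (c - q ^ n) * iteratedDeriv n F 0 = 0 := by linear_combination h
    exact (mul_eq_zero.mp hmul).resolve_left hcq
  refine ⟨F 0, fun x hx => ?_⟩
  rw [← hFf x hx, ← Complex.taylorSeries_eq_of_entire' 0 x hF,
    tsum_eq_single 0 fun n hn => by simp [hderiv n hn]]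
  simp

theorem eq_zero_of_qdiff_add_const {k : ℂ} (hq0 : 0 < ‖q‖) (hq1 : ‖q‖ < 1)
    (hf : ∀ x, x ≠ 0 → DifferentiableAt ℂ f x) (heq : ∀ x, x ≠ 0 → f (q * x) = f x + k) :
    k = 0 := by
  by_contra hk
  -- `g = exp (π i f / k)` would solve `g (q x) = - g x`, forcing `g = 0`.
  set g := fun x => Complex.exp (Real.pi * Complex.I / k * f x)
  have hg : ∀ x, x ≠ 0 → DifferentiableAt ℂ g x := fun x hx =>
    ((hf x hx).const_mul _).cexp
  have hgeq : ∀ x, x ≠ 0 → g (q * x) = -1 * g x := fun x hx => by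
    simp only [g, heq x hx, mul_add, Complex.exp_add, div_mul_cancel₀ _ hk,
      Complex.exp_pi_mul_I]
    ring
  obtain ⟨a, ha⟩ :=
    exists_const_of_qdiff hq0 hq1 hg hgeq (by simpa using hq1) (by simpa using hq1)
  have h1 := hgeq 1 one_ne_zero
  rw [mul_one, ha q (norm_pos_iff.mp hq0), ha 1 one_ne_zero] at h1
  have ha0 : a = 0 := by linear_combination h1 / 2
  exact Complex.exp_ne_zero _ ((ha 1 one_ne_zero).trans ha0)

theorem exists_const_of_qdiff_add {k : ℂ} (hq0 : 0 < ‖q‖) (hq1 : ‖q‖ < 1)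
    (hf : ∀ x, x ≠ 0 → DifferentiableAt ℂ f x) (heq : ∀ x, x ≠ 0 → f (q * x) = c * f x + k)
    (hc₁ : ‖q‖ < ‖c‖) (hc₂ : ‖c‖ * ‖q‖ < 1) :
    ∃ a, ∀ x, x ≠ 0 → f x = a := by
  by_cases hc : c = 1
  · subst hc
    have hk := eq_zero_of_qdiff_add_const hq0 hq1 hf fun x hx => by rw [heq x hx, one_mul]
    exact exists_const_of_qdiff hq0 hq1 hf (fun x hx => by rw [heq x hx, hk, add_zero])
      hc₁ hc₂
  · set b := k / (1 - c)
    have hb : k = b * (1 - c) := (div_mul_cancel₀ k (sub_ne_zero.mpr (Ne.symm hc))).symm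
    obtain ⟨a, ha⟩ := exists_const_of_qdiff (f := fun x => f x - b) hq0 hq1
      (fun x hx => (hf x hx).sub_const b)
      (fun x hx => by simp only [heq x hx, hb]; ring) hc₁ hc₂
    exact ⟨a + b, fun x hx => by rw [← ha x hx]; ring⟩

end QDifference

lemma InAnn.norm_div_bounds {q a b : ℂ} (ha : InAnn q a) (hb : InAnn q b) :
    ‖q‖ < ‖b / a‖ ∧ ‖b / a‖ * ‖q‖ < 1 := by
  have ha0 : 0 < ‖a‖ := (norm_nonneg q).trans_lt ha.1
  rw [norm_div, lt_div_iff₀ ha0, div_mul_eq_mul_div, div_lt_one ha0]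
  constructor <;> nlinarith [ha.1, ha.2, hb.1, hb.2, norm_nonneg q]

theorem exists_const_of_qdiff_inAnn {q a b k : ℂ} {f : ℂ → ℂ} (hq0 : 0 < ‖q‖)
    (hq1 : ‖q‖ < 1) (ha : InAnn q a) (hb : InAnn q b) (hf : ∀ x, x ≠ 0 → DifferentiableAt ℂ f x)
    (heq : ∀ x, x ≠ 0 → f (q * x) * a = b * f x + k) :
    ∃ L, ∀ x, x ≠ 0 → f x = L := by
  have ha0 : a ≠ 0 := norm_pos_iff.mp ((norm_nonneg q).trans_lt ha.1)
  obtain ⟨hc₁, hc₂⟩ := ha.norm_div_bounds hb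
  refine exists_const_of_qdiff_add (k := k / a) hq0 hq1 hf (fun x hx => ?_) hc₁ hc₂
  rw [← mul_div_cancel_right₀ (f (q * x)) ha0, heq x hx]
  ring

theorem eq_apply_one_of_gauge_triangular {q : ℂ} {A B : Matrix (Fin 2) (Fin 2) ℂ}
    {Λ : ℂ → Matrix (Fin 2) (Fin 2) ℂ} (hq0 : 0 < ‖q‖) (hq1 : ‖q‖ < 1)
    (hA : A 1 0 = 0) (hB : B 1 0 = 0) (hA₀ : InAnn q (A 0 0)) (hA₁ : InAnn q (A 1 1))
    (hB₀ : InAnn q (B 0 0)) (hB₁ : InAnn q (B 1 1)) (hΛ : MatHolo Λ)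
    (heq : ∀ x, x ≠ 0 → Λ (q * x) * A = B * Λ x) :
    ∀ x, x ≠ 0 → Λ x = Λ 1 := by
  have hE : ∀ i j, ∀ x, x ≠ 0 → Λ (q * x) i 0 * A 0 j + Λ (q * x) i 1 * A 1 j =
      B i 0 * Λ x 0 j + B i 1 * Λ x 1 j := fun i j x hx => by
    simpa [Matrix.mul_apply, Fin.sum_univ_two] using congrFun (congrFun (heq x hx) i) j
  have hq : q ≠ 0 := norm_pos_iff.mp hq0
  -- Solve for the entries in the order (1,0), (0,0), (1,1), (0,1): each satisfies a scalar
  -- equation `f (q x) a = b f x + k` whose inhomogeneity involves only entries already known.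
  obtain ⟨c₁₀, h₁₀⟩ := exists_const_of_qdiff_inAnn (k := 0) hq0 hq1 hA₀ hB₁ (hΛ 1 0)
    fun x hx => by linear_combination hE 1 0 x hx - Λ (q * x) 1 1 * hA + Λ x 0 0 * hB
  obtain ⟨c₀₀, h₀₀⟩ := exists_const_of_qdiff_inAnn (k := B 0 1 * c₁₀) hq0 hq1 hA₀ hB₀
    (hΛ 0 0) fun x hx => by
      linear_combination hE 0 0 x hx - Λ (q * x) 0 1 * hA + B 0 1 * h₁₀ x hx
  obtain ⟨c₁₁, h₁₁⟩ := exists_const_of_qdiff_inAnn (k := -(c₁₀ * A 0 1)) hq0 hq1 hA₁ hB₁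
    (hΛ 1 1) fun x hx => by
      linear_combination hE 1 1 x hx + Λ x 0 1 * hB - A 0 1 * h₁₀ (q * x) (mul_ne_zero hq hx)
  obtain ⟨c₀₁, h₀₁⟩ := exists_const_of_qdiff_inAnn (k := B 0 1 * c₁₁ - c₀₀ * A 0 1) hq0 hq1
    hA₁ hB₀ (hΛ 0 1) fun x hx => by
      linear_combination
        hE 0 1 x hx + B 0 1 * h₁₁ x hx - A 0 1 * h₀₀ (q * x) (mul_ne_zero hq hx)
  intro x hx
  ext i j
  fin_cases i <;> fin_cases j
  · exact (h₀₀ x hx).trans (h₀₀ 1 one_ne_zero).symm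
  · exact (h₀₁ x hx).trans (h₀₁ 1 one_ne_zero).symm
  · exact (h₁₀ x hx).trans (h₁₀ 1 one_ne_zero).symm
  · exact (h₁₁ x hx).trans (h₁₁ 1 one_ne_zero).symm

lemma exists_zpow_mul_inAnn {q l : ℂ} (hq0 : 0 < ‖q‖) (hq1 : ‖q‖ < 1) (hl : l ≠ 0) :
    ∃ n : ℤ, InAnn q (q ^ n * l) := by
  obtain ⟨n, hlo, hhi⟩ :=
    exists_mem_Ioc_zpow (norm_pos_iff.mpr hl) ((one_lt_inv₀ hq0).mpr hq1)
  have hpos : 0 < ‖q‖ ^ (n + 1) := zpow_pos hq0 _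
  refine ⟨n + 1, ?_, ?_⟩ <;> rw [norm_mul, norm_zpow]
  · calc ‖q‖ = ‖q‖ ^ (n + 1) * ‖q‖⁻¹ ^ n := by
          rw [_root_.inv_zpow', ← zpow_add₀ hq0.ne']; simp
      _ < ‖q‖ ^ (n + 1) * ‖l‖ := mul_lt_mul_of_pos_left hlo hpos
  · calc ‖q‖ ^ (n + 1) * ‖l‖ ≤ ‖q‖ ^ (n + 1) * ‖q‖⁻¹ ^ (n + 1) :=
          mul_le_mul_of_nonneg_left hhi hpos.le
      _ = 1 := by rw [_root_.inv_zpow, mul_inv_cancel₀ hpos.ne']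

lemma MatHolo.mul {Λ M : ℂ → Matrix (Fin 2) (Fin 2) ℂ} (hΛ : MatHolo Λ) (hM : MatHolo M) :
    MatHolo fun x => Λ x * M x := fun i j x hx => by
  simp only [Matrix.mul_apply, Fin.sum_univ_two]
  exact ((hΛ i 0 x hx).mul (hM 0 j x hx)).add ((hΛ i 1 x hx).mul (hM 1 j x hx))

lemma GLO.mul {Λ M : ℂ → Matrix (Fin 2) (Fin 2) ℂ} (hΛ : GLO Λ) (hM : GLO M) :
    GLO fun x => Λ x * M x :=
  ⟨hΛ.1.mul hM.1, fun x hx => by rw [Matrix.det_mul]; exact (hΛ.2 x hx).mul (hM.2 x hx)⟩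

lemma GLO.diagonal_zpow (m n : ℤ) : GLO fun x => Matrix.diagonal ![x ^ m, x ^ n] := by
  refine ⟨fun i j x hx => ?_, fun x hx => ?_⟩
  · fin_cases i <;> fin_cases j <;> simp [differentiableAt_zpow, hx]
  · simpa [Matrix.det_diagonal] using ⟨zpow_ne_zero m hx, zpow_ne_zero n hx⟩

namespace GaugeEq

variable {q : ℂ} {A B C : Matrix (Fin 2) (Fin 2) ℂ}

lemma trans (h₁ : GaugeEq q A B) (h₂ : GaugeEq q B C) : GaugeEq q A C := by
  obtain ⟨Λ, hΛ, hΛeq⟩ := h₁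
  obtain ⟨M, hM, hMeq⟩ := h₂
  refine ⟨fun x => M x * Λ x, hM.mul hΛ, fun x hx => ?_⟩
  rw [mul_assoc, hΛeq x hx, ← mul_assoc, hMeq x hx, mul_assoc]

lemma of_similar {P : Matrix (Fin 2) (Fin 2) ℂ} (hP : IsUnit P.det) (h : P * A = B * P) :
    GaugeEq q A B :=
  ⟨fun _ => P, ⟨fun _ _ _ _ => differentiableAt_const _, fun _ _ => hP⟩, fun _ _ => h⟩

lemma diagonal_zpow (a d : ℂ) (m n : ℤ) :
    GaugeEq q (Matrix.diagonal ![a, d]) (Matrix.diagonal ![q ^ m * a, q ^ n * d]) := by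
  refine ⟨_, GLO.diagonal_zpow m n, fun x _ => ?_⟩
  rw [Matrix.diagonal_mul_diagonal, Matrix.diagonal_mul_diagonal]
  congr 1
  ext i; fin_cases i <;> simp [mul_zpow] <;> ring

lemma jordan_zpow (a : ℂ) (n : ℤ) :
    GaugeEq q !![a, a; 0, a] !![q ^ n * a, q ^ n * a; 0, q ^ n * a] := by
  refine ⟨_, GLO.diagonal_zpow n n, fun x _ => ?_⟩
  ext i j; fin_cases i <;> fin_cases j <;> simp [Matrix.mul_apply, mul_zpow] <;> ring

end GaugeEq

lemma exists_similar_triangular (C : Matrix (Fin 2) (Fin 2) ℂ) :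
    ∃ P : Matrix (Fin 2) (Fin 2) ℂ, ∃ a b d : ℂ,
      IsUnit P.det ∧ P * C = !![a, b; 0, d] * P := by
  by_cases hc : C 1 0 = 0
  · refine ⟨1, C 0 0, C 0 1, C 1 1, by simp, ?_⟩
    rw [one_mul, mul_one, Matrix.eta_fin_two C, hc]
    simp
  · -- `(C 1 0, m - C 0 0)` is a left eigenvector for the eigenvalue `m`
    obtain ⟨m, hm⟩ : ∃ m, (m - C 0 0) * (m - C 1 1) = C 0 1 * C 1 0 := by
      obtain ⟨s, hs⟩ :=
        IsAlgClosed.exists_eq_mul_self ((C 0 0 - C 1 1) ^ 2 + 4 * C 0 1 * C 1 0)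
      exact ⟨(C 0 0 + C 1 1 + s) / 2, by linear_combination (-1 / 4 : ℂ) * hs⟩
    refine ⟨!![0, 1; C 1 0, m - C 0 0], C 0 0 + C 1 1 - m, 1, m, by simpa using hc, ?_⟩
    ext i j; fin_cases i <;> fin_cases j <;> simp [Matrix.mul_apply]
    · ring
    · linear_combination -hm

lemma exists_similar_jordan_of_triangular {a b d : ℂ} (ha : a ≠ 0) :
    ∃ S : Matrix (Fin 2) (Fin 2) ℂ, IsUnit S.det ∧
      (S * !![a, b; 0, d] = Matrix.diagonal ![a, d] * S ∨
        d = a ∧ S * !![a, b; 0, d] = !![a, a; 0, a] * S) := by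
  by_cases hda : d = a
  · subst hda
    by_cases hb : b = 0
    · refine ⟨1, by simp, Or.inl ?_⟩
      ext i j; fin_cases i <;> fin_cases j <;> simp [hb]
    · refine ⟨Matrix.diagonal ![d, b], by simp [Matrix.det_diagonal, ha, hb],
        Or.inr ⟨rfl, ?_⟩⟩
      ext i j; fin_cases i <;> fin_cases j <;> simp [Matrix.mul_apply, mul_comm]
  · have had : a - d ≠ 0 := sub_ne_zero.mpr (Ne.symm hda)
    refine ⟨!![1, b / (a - d); 0, 1], by simp, Or.inl ?_⟩
    ext i j; fin_cases i <;> fin_cases j <;> simp [Matrix.mul_apply]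
    field_simp
    ring

section Similarity

variable {A B P : Matrix (Fin 2) (Fin 2) ℂ}

lemma diag_eq_or_swap_of_similar (hA : A 1 0 = 0) (hB : B 1 0 = 0) (hP : IsUnit P.det)
    (h : P * A = B * P) :
    (B 0 0 = A 0 0 ∧ B 1 1 = A 1 1) ∨ (B 0 0 = A 1 1 ∧ B 1 1 = A 0 0) := by
  have hconj : B = P * A * P⁻¹ := by rw [h, mul_assoc, Matrix.mul_nonsing_inv _ hP, mul_one]
  have htr : B.trace = A.trace := by
    rw [hconj, Matrix.trace_mul_comm, ← mul_assoc, Matrix.nonsing_inv_mul _ hP, one_mul]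
  have hdet : B.det = A.det := by
    rw [hconj, Matrix.det_conj ((Matrix.isUnit_iff_isUnit_det P).mpr hP)]
  rw [Matrix.trace_fin_two, Matrix.trace_fin_two] at htr
  rw [Matrix.det_fin_two, Matrix.det_fin_two, hA, hB] at hdet
  have hroot : (B 0 0 - A 0 0) * (B 0 0 - A 1 1) = 0 := by
    linear_combination B 0 0 * htr - hdet
  rcases mul_eq_zero.mp hroot with h₀ | h₁
  · exact Or.inl ⟨sub_eq_zero.mp h₀, by linear_combination htr - h₀⟩
  · exact Or.inr ⟨sub_eq_zero.mp h₁, by linear_combination htr - h₁⟩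

lemma eq_of_similar_of_commute (hP : IsUnit P.det) (h : P * A = B * P)
    (hc : Commute P A ∨ Commute P B) : B = A := by
  have hPu : IsUnit P := (Matrix.isUnit_iff_isUnit_det P).mpr hP
  rcases hc with hc | hc
  · exact hPu.mul_right_cancel (h.symm.trans hc.eq)
  · exact (hPu.mul_left_cancel (h.trans hc.symm.eq)).symm

lemma commute_diagonal_const (ξ : ℂ) : Commute P (Matrix.diagonal ![ξ, ξ]) := by
  have : Matrix.diagonal ![ξ, ξ] = Matrix.scalar (Fin 2) ξ := by
    ext i j; fin_cases i <;> fin_cases j <;> simp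
  rw [this]
  exact (Matrix.scalar_commute ξ (Commute.all ξ) P).symm

end Similarity

lemma NormalForm.triangular {q : ℂ} {C : Matrix (Fin 2) (Fin 2) ℂ} (h : NormalForm q C) :
    C 1 0 = 0 ∧ InAnn q (C 0 0) ∧ InAnn q (C 1 1) := by
  rcases h with ⟨ξ, hξ, rfl⟩ | ⟨ξ₁, ξ₂, hξ₁, hξ₂, -, rfl⟩ | ⟨ξ, hξ, rfl⟩ <;> simp [*]

theorem NormalForm.eq_or_swap_of_gaugeEq {q : ℂ} (hq0 : 0 < ‖q‖) (hq1 : ‖q‖ < 1)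
    {C₀ C₀' : Matrix (Fin 2) (Fin 2) ℂ} (h₀ : NormalForm q C₀) (h₀' : NormalForm q C₀')
    (hg : GaugeEq q C₀ C₀') :
    C₀' = C₀ ∨ ∃ ξ₁ ξ₂ : ℂ, ξ₁ ≠ ξ₂ ∧ C₀ = Matrix.diagonal ![ξ₁, ξ₂] ∧
      C₀' = Matrix.diagonal ![ξ₂, ξ₁] := by
  obtain ⟨Λ, ⟨hΛ, hdet⟩, heq⟩ := hg
  obtain ⟨hA, hA₀, hA₁⟩ := h₀.triangular
  obtain ⟨hB, hB₀, hB₁⟩ := h₀'.triangular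
  have hconst := eq_apply_one_of_gauge_triangular hq0 hq1 hA hB hA₀ hA₁ hB₀ hB₁ hΛ heq
  have hP := hdet 1 one_ne_zero
  have hsim : Λ 1 * C₀ = C₀' * Λ 1 := by
    simpa [hconst q (norm_pos_iff.mp hq0)] using heq 1 one_ne_zero
  have hdiag := diag_eq_or_swap_of_similar hA hB hP hsim
  rcases h₀' with ⟨η, -, rfl⟩ | h₀'
  · exact Or.inl (eq_of_similar_of_commute hP hsim (Or.inr (commute_diagonal_const η)))
  rcases h₀ with ⟨ξ, -, rfl⟩ | ⟨ξ₁, ξ₂, -, -, hne, rfl⟩ | ⟨ξ, -, rfl⟩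
  · exact Or.inl (eq_of_similar_of_commute hP hsim (Or.inl (commute_diagonal_const ξ)))
  all_goals
    rcases h₀' with ⟨η₁, η₂, -, -, hne', rfl⟩ | ⟨η, -, rfl⟩ <;>
    simp only [Matrix.diagonal_apply_eq, Matrix.of_apply, Matrix.cons_val', Matrix.cons_val_zero,
      Matrix.cons_val_one, Matrix.empty_val', Matrix.cons_val_fin_one, or_self, and_self] at hdiag
  · rcases hdiag with ⟨h₁, h₂⟩ | ⟨h₁, h₂⟩ <;> subst η₁ η₂
    exacts [Or.inl rfl, Or.inr ⟨ξ₁, ξ₂, hne, rfl, rfl⟩]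
  · exact absurd (by rcases hdiag with ⟨h₁, h₂⟩ | ⟨h₂, h₁⟩ <;> exact h₁.symm.trans h₂) hne
  · exact absurd (hdiag.1.trans hdiag.2.symm) hne'
  · exact Or.inl (by rw [hdiag])

theorem NormalForm.exists_gaugeEq {q : ℂ} (hq0 : 0 < ‖q‖) (hq1 : ‖q‖ < 1)
    {C : Matrix (Fin 2) (Fin 2) ℂ} (hC : IsUnit C.det) :
    ∃ C₀, NormalForm q C₀ ∧ GaugeEq q C C₀ := by
  obtain ⟨P, a, b, d, hP, hPC⟩ := exists_similar_triangular C
  have had : a * d ≠ 0 := by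
    have hdet := congrArg Matrix.det hPC
    rw [Matrix.det_mul, Matrix.det_mul, Matrix.det_fin_two_of, mul_zero, sub_zero, mul_comm,
      hP.mul_left_inj] at hdet
    exact hdet ▸ hC.ne_zero
  have ha := left_ne_zero_of_mul had
  have hCT : GaugeEq q C !![a, b; 0, d] := GaugeEq.of_similar hP hPC
  obtain ⟨S, hS, hST⟩ := exists_similar_jordan_of_triangular (b := b) (d := d) ha
  rcases hST with hST | ⟨rfl, hST⟩
  · obtain ⟨m, hm⟩ := exists_zpow_mul_inAnn hq0 hq1 ha
    obtain ⟨n, hn⟩ := exists_zpow_mul_inAnn hq0 hq1 (right_ne_zero_of_mul had)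
    refine ⟨_, ?_, (hCT.trans (.of_similar hS hST)).trans (.diagonal_zpow a d m n)⟩
    by_cases h : q ^ m * a = q ^ n * d
    · exact Or.inl ⟨_, hm, by rw [h]⟩
    · exact Or.inr (Or.inl ⟨_, _, hm, hn, h, rfl⟩)
  · obtain ⟨n, hn⟩ := exists_zpow_mul_inAnn hq0 hq1 ha
    exact ⟨_, Or.inr (Or.inr ⟨_, hn, rfl⟩),
      (hCT.trans (.of_similar hS hST)).trans (.jordan_zpow d n)⟩

/-- Normal forms for the central factor, existence and uniqueness up to swapping the
diagonal entries in the generic form. -/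
theorem stmt13 (q : ℂ) (hq0 : 0 < ‖q‖) (hq1 : ‖q‖ < 1) :
    (∀ C : Matrix (Fin 2) (Fin 2) ℂ, IsUnit C.det →
      ∃ C0, NormalForm q C0 ∧ GaugeEq q C C0) ∧
    (∀ C0 C0' : Matrix (Fin 2) (Fin 2) ℂ, NormalForm q C0 → NormalForm q C0' →
      GaugeEq q C0 C0' →
      C0' = C0 ∨ ∃ ξ1 ξ2 : ℂ, ξ1 ≠ ξ2 ∧ C0 = Matrix.diagonal ![ξ1, ξ2] ∧
        C0' = Matrix.diagonal ![ξ2, ξ1]) :=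
  ⟨fun _ hC => NormalForm.exists_gaugeEq hq0 hq1 hC,
    fun _ _ h₀ h₀' hg => NormalForm.eq_or_swap_of_gaugeEq hq0 hq1 h₀ h₀' hg⟩
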